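/- Let p : X̂ → X be a semicovering map. If X is an SLT space, then X̂ is an SLT space. -/

import Mathlib

open Set TopologicalSpace unitInterval

universe u

namespace SLTF

attribute [local instance] Path.Homotopic.setoid

variable {X : Type u} [TopologicalSpace X]

/-- The homotopy class of a loop as an element of the fundamental group. -/
noncomputable def fl {x : X} (γ : Path x x) : FundamentalGroup X x :=
  @FundamentalGroup.fromPath (TopCat.of X) _ x ⟦γ⟧

/-- Multiplication of fundamental-group elements in path-concatenation order:
`pmul a b` is the class of "`a` followed by `b`". -/
noncomputable def pmul {x : X} (a b : FundamentalGroup X x) : FundamentalGroup X x :=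
  @FundamentalGroup.fromPath (TopCat.of X) _ x
    (Path.Homotopic.Quotient.trans (@FundamentalGroup.toPath (TopCat.of X) _ x a)
      (@FundamentalGroup.toPath (TopCat.of X) _ x b))

/-- A path in `X` starting at the base point `x`, recorded together with its end point. -/
structure PPath (X : Type u) [TopologicalSpace X] (x : X) where
  target : X
  path : Path x target

/-- Two paths starting at `x` are identified when they have the same end point and the
class of `α ⬝ β⁻¹` satisfies the predicate `P` (e.g. membership in a subgroup `H`). -/
def HRel (x : X) (P : Path x x → Prop) (α β : PPath X x) : Prop :=
  ∃ h : α.target = β.target, P (α.path.trans ((β.path.cast rfl h).symm))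

/-- The set `X̃` of `P`-equivalence classes of paths starting at `x`. -/
def Xtilde (x : X) (P : Path x x → Prop) : Type u := Quot (HRel x P)

/-- The class of a path in `X̃`. -/
def mkX (x : X) (P : Path x x → Prop) (α : PPath X x) : Xtilde x P := Quot.mk _ α

/-- The basic whisker-open set `([α], U)`: all classes of prolongations of `α` by a path in `U`. -/
def whBasic (x : X) (P : Path x x → Prop) (α : PPath X x) (U : Set X) : Set (Xtilde x P) :=
  { q | ∃ (y : X) (β : Path α.target y), range ⇑β ⊆ U ∧ q = mkX x P ⟨y, α.path.trans β⟩ }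

/-- The whisker topology on `X̃`, generated by the sets `([α], U)` for `U` an open
neighbourhood of the end point of `α`. -/
instance whTop (x : X) (P : Path x x → Prop) : TopologicalSpace (Xtilde x P) :=
  generateFrom
    { S | ∃ (α : PPath X x) (U : Set X), IsOpen U ∧ α.target ∈ U ∧ S = whBasic x P α U }

/-- The endpoint projection `p : X̃ → X`. -/
def endpt (x : X) (P : Path x x → Prop) : Xtilde x P → X :=
  Quot.lift (fun α => α.target) (fun _ _ h => h.elim fun e _ => e)

/-- The space of paths in `X` starting at `x`, with the compact-open topology. -/
def PSp (X : Type u) [TopologicalSpace X] (x : X) : Type u := { f : C(I, X) // f 0 = x }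

instance (x : X) : TopologicalSpace (PSp X x) := instTopologicalSpaceSubtype

/-- The natural surjection from the path space onto `X̃`. -/
def toXt (x : X) (P : Path x x → Prop) : PSp X x → Xtilde x P :=
  fun f => mkX x P ⟨f.1 1, ⟨f.1, f.2, rfl⟩⟩

/-- The quotient of the compact-open topology on `X̃`. -/
def topTop (x : X) (P : Path x x → Prop) : TopologicalSpace (Xtilde x P) :=
  coinduced (toXt x P) inferInstance

/-- Membership in a subgroup `H`, as a predicate on loops. -/
noncomputable def loopMem (x : X) (H : Subgroup (FundamentalGroup X x)) : Path x x → Prop :=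
  fun γ => fl γ ∈ H

/-- `X̃_H`, the classes of paths starting at `x₀` modulo `H`. -/
abbrev XtildeH (x₀ : X) (H : Subgroup (FundamentalGroup X x₀)) : Type u :=
  Xtilde x₀ (loopMem x₀ H)

/-- The fiber of the endpoint projection over `y`, with the subspace (whisker) topology. -/
abbrev Fib (x : X) (P : Path x x → Prop) (y : X) : Type u :=
  { q : Xtilde x P // endpt x P q = y }

/-- The class in the fiber over `y` of a path from `x` to `y`. -/
def mkFib (x : X) (P : Path x x → Prop) {y : X} (δ : Path x y) : Fib x P y :=
  ⟨mkX x P ⟨y, δ⟩, rfl⟩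

/-- The whisker topology on the fundamental group `π₁(X, x)`: basic neighbourhoods of `a`
are the sets `{a ⋆ [γ] : γ a loop in U at x}` for `U` an open neighbourhood of `x`. -/
noncomputable def whPi1 (x : X) : TopologicalSpace (FundamentalGroup X x) :=
  generateFrom
    { S | ∃ (a : FundamentalGroup X x) (U : Set X), IsOpen U ∧ x ∈ U ∧
        S = { b | ∃ γ : Path x x, range ⇑γ ⊆ U ∧ b = pmul a (fl γ) } }

/-- The quotient topology on `π₁(X, x)` induced from the loop space with the
compact-open topology. -/
noncomputable def qtopPi1 (x : X) : TopologicalSpace (FundamentalGroup X x) :=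
  coinduced (fun γ : Path x x => fl γ) inferInstance

/-- `X` is `H`-SLT at `x₀`. -/
noncomputable def IsHSLTAt (x₀ : X) (H : Subgroup (FundamentalGroup X x₀)) : Prop :=
  ∀ (y : X) (α : Path x₀ y) (U : Set X), IsOpen U → x₀ ∈ U →
    ∃ V : Set X, IsOpen V ∧ y ∈ V ∧
      ∀ β : Path y y, range ⇑β ⊆ V →
        ∃ γ : Path x₀ x₀, range ⇑γ ⊆ U ∧
          fl ((α.trans (β.trans α.symm)).trans γ.symm) ∈ H

/-- `X` is SLT at `x`. -/
def IsSLTAt (X : Type u) [TopologicalSpace X] (x : X) : Prop :=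
  ∀ (y : X) (α : Path x y) (U : Set X), IsOpen U → x ∈ U →
    ∃ V : Set X, IsOpen V ∧ y ∈ V ∧
      ∀ β : Path y y, range ⇑β ⊆ V →
        ∃ γ : Path x x, range ⇑γ ⊆ U ∧ (α.trans (β.trans α.symm)).Homotopic γ

/-- `X` is an SLT space. -/
def IsSLT (X : Type u) [TopologicalSpace X] : Prop := ∀ x : X, IsSLTAt X x

/-- `α` (a path from `x` to `y`) is an `H`-SLT path: for every path `lam` from `x₀` to `x`
and open `U ∋ x` there is an open `V ∋ y` such that every loop `β` in `V` at `y` transfers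
to a loop `γ` in `U` at `x` with `[α ⋆ β ⋆ α⁻¹ ⋆ γ⁻¹] ∈ [lam⁻¹ H lam]`, i.e.
`[lam ⋆ (α ⋆ β ⋆ α⁻¹ ⋆ γ⁻¹) ⋆ lam⁻¹] ∈ H`. -/
noncomputable def IsHSLTPath (x₀ : X) (H : Subgroup (FundamentalGroup X x₀)) {x y : X}
    (α : Path x y) : Prop :=
  ∀ (lam : Path x₀ x) (U : Set X), IsOpen U → x ∈ U →
    ∃ V : Set X, IsOpen V ∧ y ∈ V ∧
      ∀ β : Path y y, range ⇑β ⊆ V →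
        ∃ γ : Path x x, range ⇑γ ⊆ U ∧
          fl (lam.trans ((((α.trans (β.trans α.symm)).trans γ.symm)).trans lam.symm)) ∈ H

/-- `X` is an `H`-SLT space: for every `x` and every path `lam` from `x₀` to `x`, `X` is
`[lam⁻¹ H lam]`-SLT at `x`. -/
noncomputable def IsHSLTSpace (x₀ : X) (H : Subgroup (FundamentalGroup X x₀)) : Prop :=
  ∀ (x y : X) (α : Path x y), IsHSLTPath x₀ H α

/-- Membership in the conjugate subgroup `[lam⁻¹ H lam]` of `π₁(X, x)`,
as a predicate on loops at `x`. -/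
noncomputable def conjMem (x₀ : X) (H : Subgroup (FundamentalGroup X x₀)) {x : X}
    (lam : Path x₀ x) : Path x x → Prop :=
  fun δ => fl (lam.trans (δ.trans lam.symm)) ∈ H

/-- `X` is homotopically Hausdorff relative to `H`. -/
noncomputable def HomHausdorffRel (x₀ : X) (H : Subgroup (FundamentalGroup X x₀)) : Prop :=
  ∀ (y : X) (α : Path x₀ y) (g : FundamentalGroup X x₀), g ∉ H →
    ∃ U : Set X, IsOpen U ∧ y ∈ U ∧
      ∀ γ : Path y y, range ⇑γ ⊆ U →
        ¬ ∃ h ∈ H, fl (α.trans (γ.trans α.symm)) = pmul h g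

/-- `X` is homotopically path Hausdorff relative to `H`. -/
noncomputable def HomPathHausdorffRel (x₀ : X) (H : Subgroup (FundamentalGroup X x₀)) : Prop :=
  ∀ (y : X) (α β : Path x₀ y), fl (α.trans β.symm) ∉ H →
    ∃ (n : ℕ) (t : Fin (n + 1) → I) (U : Fin n → Set X),
      t 0 = 0 ∧ t (Fin.last n) = 1 ∧ StrictMono t ∧
      (∀ i : Fin n, IsOpen (U i)) ∧
      (∀ i : Fin n, ⇑α '' Set.Icc (t i.castSucc) (t i.succ) ⊆ U i) ∧
      ∀ γ : Path x₀ y,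
        (∀ i : Fin n, ⇑γ '' Set.Icc (t i.castSucc) (t i.succ) ⊆ U i) →
        (∀ i : Fin (n + 1), γ (t i) = α (t i)) →
        fl (γ.trans β.symm) ∉ H

/-- The endpoint projection `p : X̃ → X` (with the whisker topology on `X̃`) has the
unique path lifting property. -/
def UPLP (x : X) (P : Path x x → Prop) : Prop :=
  ∀ g₁ g₂ : C(I, Xtilde x P), g₁ 0 = g₂ 0 →
    (∀ t, endpt x P (g₁ t) = endpt x P (g₂ t)) → g₁ = g₂

/-- A semicovering map: a local homeomorphism with (continuous) unique lifting of paths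
and of homotopies. -/
structure IsSemicovering {Y : Type u} [TopologicalSpace Y] (p : Y → X) : Prop where
  localHomeo : IsLocalHomeomorph p
  pathLift : ∀ (y : Y) (γ : C(I, X)), γ 0 = p y →
    ∃! γh : C(I, Y), γh 0 = y ∧ ∀ t, p (γh t) = γ t
  contPathLift : ∀ y : Y, ∃ L : { γ : C(I, X) // γ 0 = p y } → C(I, Y),
    Continuous L ∧ ∀ γ, (L γ) 0 = y ∧ ∀ t, p ((L γ) t) = (γ : C(I, X)) t
  homotopyLift : ∀ (y : Y) (Φ : C(I × I, X)), Φ (0, 0) = p y →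
    ∃! Φh : C(I × I, Y), Φh (0, 0) = y ∧ ∀ z, p (Φh z) = Φ z
  contHomotopyLift : ∀ y : Y, ∃ L : { Φ : C(I × I, X) // Φ (0, 0) = p y } → C(I × I, Y),
    Continuous L ∧ ∀ Φ, (L Φ) (0, 0) = y ∧ ∀ z, p ((L Φ) z) = (Φ : C(I × I, X)) z

/-- An `lpc₀`-covering map with `p₊π₁(Y, ·) = H`: a map which is equivalent, as a map
over `X`, to the endpoint projection `p_H : X̃_H → X` having the unique path lifting
property (with `Y` path connected and locally path connected). -/
structure IsLpc0Covering {Y : Type u} [TopologicalSpace Y] (p : Y → X) (x₀ : X)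
    (H : Subgroup (FundamentalGroup X x₀)) : Prop where
  pathConnected : PathConnectedSpace Y
  locPathConnected : LocPathConnectedSpace Y
  uplp : UPLP x₀ (loopMem x₀ H)
  equiv : ∃ φ : Y ≃ₜ XtildeH x₀ H, ∀ y, endpt x₀ (loopMem x₀ H) (φ y) = p y

/-- The homomorphism induced by `p` on fundamental groups, as a function. -/
noncomputable def pStar {Y : Type u} [TopologicalSpace Y] (p : C(Y, X)) (y₀ : Y) :
    FundamentalGroup Y y₀ → FundamentalGroup X (p y₀) :=
  fun g => @FundamentalGroup.fromPath (TopCat.of X) _ (p y₀)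
    (Path.Homotopic.Quotient.map (@FundamentalGroup.toPath (TopCat.of Y) _ y₀ g) p)

/-!
A semicovering map `p` is injective on path-homotopy classes: lifting a homotopy between
`p ∘ f` and `p ∘ g` and using uniqueness of path lifts on its four edges gives a homotopy between
`f` and `g`. Given a path `α` from `y` and a neighbourhood `U` of `y`, apply the SLT property of
`X` to `p ∘ α` and to a small neighbourhood of `p y` over which `p` has a local inverse landing
in `U`; the loop `γ` it produces lifts through that inverse to a loop `γ'` in `U`, and
`α ⋆ β ⋆ α⁻¹ ≃ γ'` because the two sides become homotopic after applying `p`.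
-/

end SLTF

theorem IsLocalHomeomorph.exists_isOpen_loop_lift {X Y : Type u} [TopologicalSpace X]
    [TopologicalSpace Y] {p : Y → X} (hp : IsLocalHomeomorph p) {y : Y} {U : Set Y}
    (hU : IsOpen U) (hy : y ∈ U) :
    ∃ N : Set X, IsOpen N ∧ p y ∈ N ∧ ∀ γ : Path (p y) (p y), range γ ⊆ N →
      ∃ γ' : Path y y, range γ' ⊆ U ∧ γ'.map hp.continuous = γ := by
  obtain ⟨e, hye, rfl⟩ := hp y
  have hW : e.source ∩ U ⊆ e.source := inter_subset_left
  refine ⟨e '' (e.source ∩ U), e.isOpen_image_of_subset_source (e.open_source.inter hU) hW,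
    mem_image_of_mem e ⟨hye, hy⟩, fun γ hγ => ?_⟩
  have hγt : ∀ t, γ t ∈ e '' (e.source ∩ U) := fun t => hγ ⟨t, rfl⟩
  have hinv : ∀ t, e.symm (γ t) ∈ e.source ∩ U := fun t =>
    e.symm_image_image_of_subset_source hW ▸ mem_image_of_mem e.symm (hγt t)
  have htarget : ∀ t, γ t ∈ e.target := fun t => e.image_source_eq_target ▸ image_mono hW (hγt t)
  have hendpt : e.symm (e y) = y := e.left_inv hye
  let γ' : Path y y :=
    { toFun := fun t => e.symm (γ t)
      continuous_toFun := e.continuousOn_symm.comp_continuous γ.continuous htarget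
      source' := by simp only [γ.source, hendpt]
      target' := by simp only [γ.target, hendpt] }
  refine ⟨γ', range_subset_iff.2 fun t => (hinv t).2, ?_⟩
  ext t
  exact e.right_inv (htarget t)

namespace SLTF

namespace IsSemicovering

variable {X Y : Type u} [TopologicalSpace X] [TopologicalSpace Y] {p : Y → X}

theorem continuous (hsc : IsSemicovering p) : Continuous p :=
  hsc.localHomeo.continuous

theorem eq_of_comp_eq (hsc : IsSemicovering p) {g₁ g₂ : C(I, Y)} (h0 : g₁ 0 = g₂ 0)
    (hp : ∀ t, p (g₁ t) = p (g₂ t)) : g₁ = g₂ := by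
  obtain ⟨g, -, huniq⟩ := hsc.pathLift (g₂ 0) ((ContinuousMap.mk p hsc.continuous).comp g₂) rfl
  exact (huniq g₁ ⟨h0, hp⟩).trans (huniq g₂ ⟨rfl, fun _ => rfl⟩).symm

theorem eq_const_of_comp_eq_const (hsc : IsSemicovering p) {g : C(I, Y)} {x : X}
    (hp : ∀ t, p (g t) = x) (t : I) : g t = g 0 := by
  have hconst : g = ContinuousMap.const I (g 0) :=
    hsc.eq_of_comp_eq rfl fun t => (hp t).trans (hp 0).symm
  exact DFunLike.congr_fun hconst t

theorem homotopic_of_map_homotopic (hsc : IsSemicovering p) {y₀ y₁ : Y} {f g : Path y₀ y₁}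
    (h : (f.map hsc.continuous).Homotopic (g.map hsc.continuous)) : f.Homotopic g := by
  obtain ⟨F⟩ := h
  obtain ⟨Φ, ⟨hΦ0, hΦ⟩, -⟩ := hsc.homotopyLift y₀ F.toContinuousMap (by simp)
  have hbottom : Φ.curry 0 = f.toContinuousMap :=
    hsc.eq_of_comp_eq (hΦ0.trans f.source.symm) fun s => by simp [hΦ]
  have hleft : ∀ t, Φ (t, 0) = y₀ := fun t =>
    (hsc.eq_const_of_comp_eq_const (g := (Φ.comp ContinuousMap.prodSwap).curry 0) (x := p y₀)
      (fun t => by simp [hΦ]) t).trans hΦ0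
  have hright : ∀ t, Φ (t, 1) = y₁ := fun t =>
    (hsc.eq_const_of_comp_eq_const (g := (Φ.comp ContinuousMap.prodSwap).curry 1) (x := p y₁)
      (fun t => by simp [hΦ]) t).trans
      ((DFunLike.congr_fun hbottom 1).trans f.target)
  have htop : Φ.curry 1 = g.toContinuousMap :=
    hsc.eq_of_comp_eq ((hleft 1).trans g.source.symm) fun s => by simp [hΦ]
  exact ⟨{ toContinuousMap := Φ
           map_zero_left := DFunLike.congr_fun hbottom
           map_one_left := DFunLike.congr_fun htop
           prop' := by
             rintro t s (rfl | rfl)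
             · simp [hleft]
             · simp [hright] }⟩

end IsSemicovering

/-- Let `p : X̂ → X` be a semicovering map. If `X` is an SLT space,
then `X̂` is an SLT space. -/
theorem statement11 {X Y : Type u} [TopologicalSpace X] [TopologicalSpace Y]
    (p : Y → X) (hsc : IsSemicovering p) (hslt : IsSLT X) : IsSLT Y := by
  intro y z α U hU hyU
  obtain ⟨N, hN, hyN, hlift⟩ := hsc.localHomeo.exists_isOpen_loop_lift hU hyU
  obtain ⟨V, hV, hzV, hVloops⟩ := hslt (p y) (p z) (α.map hsc.continuous) N hN hyN
  refine ⟨p ⁻¹' V, hV.preimage hsc.continuous, hzV, fun β hβ => ?_⟩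
  obtain ⟨γ, hγN, hhom⟩ :=
    hVloops (β.map hsc.continuous) (range_subset_iff.2 fun t => hβ ⟨t, rfl⟩)
  obtain ⟨γ', hγ'U, rfl⟩ := hlift γ hγN
  refine ⟨γ', hγ'U, hsc.homotopic_of_map_homotopic ?_⟩
  rwa [Path.map_trans, Path.map_trans, ← Path.map_symm]

end SLTF
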